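/- arXiv:1211.4174 — 6 statements merged into one kernel-verified Lean document; each statement's English description precedes it below -/
import Mathlib

section
/- If α ≥ 1/(2^r - 1), then there exists no pair of nonnegative power levels (p₁, p₂) such that both users in the symmetric two-user network simultaneously achieve throughput at least r, i.e., log₂(1 + pᵢ/(α·p_{3-i} + σ²)) ≥ r for i = 1, 2 with p₁, p₂ ≥ 0 has no solution. -/
theorem stmt_1 (r α σ2 : ℝ) (hr : 0 < r) (hα : 0 < α) (hσ : 0 < σ2)
    (h : 1 / ((2:ℝ) ^ r - 1) ≤ α) :
    ¬ ∃ p₁ p₂ : ℝ, 0 ≤ p₁ ∧ 0 ≤ p₂ ∧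
      r ≤ Real.logb 2 (1 + p₁ / (α * p₂ + σ2)) ∧
      r ≤ Real.logb 2 (1 + p₂ / (α * p₁ + σ2)) := by
  rintro ⟨p₁, p₂, hp₁, hp₂, h₁, h₂⟩
  have hc : (1:ℝ) < (2:ℝ) ^ r := Real.one_lt_rpow_iff_of_pos (by norm_num) |>.2 (Or.inl ⟨by norm_num, hr⟩)
  have hcpos : (0:ℝ) < (2:ℝ) ^ r - 1 := by linarith
  have hαc : 1 ≤ α * ((2:ℝ) ^ r - 1) := by
    rw [div_le_iff₀ hcpos] at h
    linarith
  have hd₂ : (0:ℝ) < α * p₂ + σ2 := by positivity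
  have hd₁ : (0:ℝ) < α * p₁ + σ2 := by positivity
  have hx₁ : (0:ℝ) < 1 + p₁ / (α * p₂ + σ2) := by positivity
  have hx₂ : (0:ℝ) < 1 + p₂ / (α * p₁ + σ2) := by positivity
  have k₁ : (2:ℝ) ^ r ≤ 1 + p₁ / (α * p₂ + σ2) :=
    (Real.le_logb_iff_rpow_le (by norm_num) hx₁).1 h₁
  have k₂ : (2:ℝ) ^ r ≤ 1 + p₂ / (α * p₁ + σ2) :=
    (Real.le_logb_iff_rpow_le (by norm_num) hx₂).1 h₂
  have m₁ : ((2:ℝ) ^ r - 1) * (α * p₂ + σ2) ≤ p₁ := by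
    rw [← sub_le_iff_le_add'] at k₁
    calc ((2:ℝ) ^ r - 1) * (α * p₂ + σ2) ≤ (p₁ / (α * p₂ + σ2)) * (α * p₂ + σ2) := by
          apply mul_le_mul_of_nonneg_right k₁ hd₂.le
      _ = p₁ := div_mul_cancel₀ _ hd₂.ne'
  have m₂ : ((2:ℝ) ^ r - 1) * (α * p₁ + σ2) ≤ p₂ := by
    rw [← sub_le_iff_le_add'] at k₂
    calc ((2:ℝ) ^ r - 1) * (α * p₁ + σ2) ≤ (p₂ / (α * p₁ + σ2)) * (α * p₁ + σ2) := by
          apply mul_le_mul_of_nonneg_right k₂ hd₁.le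
      _ = p₂ := div_mul_cancel₀ _ hd₁.ne'
  nlinarith [mul_pos hcpos hσ, mul_le_mul_of_nonneg_left m₂ (mul_nonneg hα.le hcpos.le)]
end

section
/- In a TDMA policy where user i transmits at power pᵢ^t at slot t and user j transmits at power pⱼ^{t+s} at slot t+s (s ≠ 0), user j can transmit in both slots t and t+s with new powers so as to achieve at least the same total discounted throughput at a strictly lower total discounted energy consumption, regardless of the discount factor, if and only if pⱼ^{t+s}·g_{jj} > pᵢ^t·g_{ij}. -/
/-!
Everything rests on the secant bounds `(b - a) / b ≤ log b - log a ≤ (b - a) / a`.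
If `p_j g_jj ≤ p_i g_ij`, the rate user `j` gains per unit power in slot `t` (at most
`g_jj / (p_i g_ij + σ²)`) never exceeds the rate lost per unit power withdrawn from slot `t + s`
(at least `g_jj / (p_j g_jj + σ²)`), so keeping the discounted throughput costs at least as much
discounted energy. If `p_j g_jj > p_i g_ij`, shifting a little power from slot `t + s` to slot `t`,
in the proportion where the two secant bounds meet, keeps the throughput and strictly saves
energy, whatever the discount weights.
-/

open Real

lemma sub_div_le_log_sub_log {a b : ℝ} (ha : 0 < a) (hb : 0 < b) :
    (b - a) / b ≤ log b - log a := by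
  have h := one_sub_inv_le_log_of_pos (div_pos hb ha)
  rwa [log_div hb.ne' ha.ne', inv_div, one_sub_div hb.ne'] at h

lemma log_sub_log_le_sub_div {a b : ℝ} (ha : 0 < a) (hb : 0 < b) :
    log b - log a ≤ (b - a) / a := by
  have h := log_le_sub_one_of_pos (div_pos hb ha)
  rwa [log_div hb.ne' ha.ne', div_sub_one ha.ne'] at h

lemma logb_one_add_div {N x : ℝ} (hN : 0 < N) (hx : 0 < N + x) :
    logb 2 (1 + x / N) = (log (N + x) - log N) / log 2 := by
  rw [logb, one_add_div hN.ne', log_div hx.ne' hN.ne']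

lemma discounted_logb_le_iff {d₁ d₂ N σ x y z : ℝ} (hN : 0 < N) (hσ : 0 < σ)
    (hx : 0 < N + x) (hy : 0 < σ + y) (hz : 0 < σ + z) :
    d₂ * logb 2 (1 + z / σ) ≤ d₁ * logb 2 (1 + x / N) + d₂ * logb 2 (1 + y / σ) ↔
      d₂ * (log (σ + z) - log (σ + y)) ≤ d₁ * (log (N + x) - log N) := by
  rw [logb_one_add_div hσ hz, logb_one_add_div hN hx, logb_one_add_div hσ hy,
    mul_div_assoc', mul_div_assoc', mul_div_assoc', ← add_div,
    div_le_div_iff_of_pos_right (log_pos one_lt_two)]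
  constructor <;> intro h <;> linarith

lemma mul_sub_le_mul_of_mul_log_sub_le {d₁ d₂ N A a x : ℝ} (hd₁ : 0 ≤ d₁) (hd₂ : 0 ≤ d₂)
    (hA : 0 < A) (hAN : A ≤ N) (ha : 0 < a) (hx : 0 ≤ x)
    (h : d₂ * (log A - log a) ≤ d₁ * (log (N + x) - log N)) :
    d₂ * (A - a) ≤ d₁ * x := by
  have hN : 0 < N := hA.trans_le hAN
  have loss : d₂ * ((A - a) / A) ≤ d₂ * (log A - log a) :=
    mul_le_mul_of_nonneg_left (sub_div_le_log_sub_log ha hA) hd₂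
  have gain : d₁ * (log (N + x) - log N) ≤ d₁ * (x / A) := by
    refine mul_le_mul_of_nonneg_left ?_ hd₁
    calc log (N + x) - log N ≤ (N + x - N) / N := log_sub_log_le_sub_div hN (by positivity)
      _ = x / N := by ring
      _ ≤ x / A := div_le_div_of_nonneg_left hx hA hAN
  have := loss.trans (h.trans gain)
  rwa [mul_div_assoc', mul_div_assoc', div_le_div_iff_of_pos_right hA] at this

lemma exists_mul_lt_mul_and_mul_log_sub_le {d₁ d₂ N A : ℝ} (hd₁ : 0 < d₁) (hd₂ : 0 < d₂)
    (hN : 0 < N) (hNA : N < A) :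
    ∃ x y, 0 ≤ x ∧ y < A - N ∧ d₁ * x < d₂ * y ∧
      d₂ * (log A - log (A - y)) ≤ d₁ * (log (N + x) - log N) := by
  have hD : 0 < A - N := sub_pos.mpr hNA
  have hs : 0 < d₁ + d₂ := add_pos hd₁ hd₂
  have hAN : 0 < A + N := by linarith
  obtain ⟨x, hx⟩ : ∃ x, x = d₂ * N * (A - N) / ((d₁ + d₂) * (A + N)) := ⟨_, rfl⟩
  obtain ⟨y, hy⟩ : ∃ y, y = d₁ * (A - N) / (2 * (d₁ + d₂)) := ⟨_, rfl⟩
  have hx0 : 0 ≤ x := hx ▸ div_nonneg (by positivity) (by positivity)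
  have hyD : y < A - N := by
    rw [hy, div_lt_iff₀ (by positivity)]
    nlinarith
  have hNx : 0 < N + x := by linarith
  have hAy : 0 < A - y := by linarith
  -- The witness is chosen so that the two secant bounds on `log` below meet exactly.
  have hbalance : d₂ * y * (N + x) = d₁ * x * (A - y) := by
    rw [hx, hy]
    field_simp
    ring
  refine ⟨x, y, hx0, hyD, ?_, ?_⟩
  · rw [hx, hy, mul_div_assoc', mul_div_assoc', div_lt_div_iff₀ (by positivity) (by positivity)]
    nlinarith [mul_pos (mul_pos (mul_pos hd₁ hd₂) hs) (mul_pos hD hD)]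
  · calc d₂ * (log A - log (A - y)) ≤ d₂ * (y / (A - y)) := by
          refine mul_le_mul_of_nonneg_left ?_ hd₂.le
          simpa using log_sub_log_le_sub_div hAy (hN.trans hNA)
      _ = d₁ * (x / (N + x)) := by
          rw [mul_div_assoc', mul_div_assoc', div_eq_div_iff hAy.ne' hNx.ne', hbalance]
      _ ≤ d₁ * (log (N + x) - log N) := by
          refine mul_le_mul_of_nonneg_left ?_ hd₁.le
          simpa using sub_div_le_log_sub_log hN hNx

lemma energy_le_of_discounted_throughput_le {d₁ d₂ g N σ p q₁ q₂ : ℝ} (hd₁ : 0 ≤ d₁)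
    (hd₂ : 0 ≤ d₂) (hg : 0 < g) (hσ : 0 < σ) (hp : 0 ≤ p) (hq₁ : 0 ≤ q₁) (hq₂ : 0 ≤ q₂)
    (hN : σ + p * g ≤ N)
    (h : d₂ * logb 2 (1 + p * g / σ) ≤
      d₁ * logb 2 (1 + q₁ * g / N) + d₂ * logb 2 (1 + q₂ * g / σ)) :
    d₂ * p ≤ d₁ * q₁ + d₂ * q₂ := by
  have hA : 0 < σ + p * g := by positivity
  have hN₀ : 0 < N := hA.trans_le hN
  rw [discounted_logb_le_iff hN₀ hσ (by positivity) (by positivity) hA] at h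
  have hreceived := mul_sub_le_mul_of_mul_log_sub_le hd₁ hd₂ hA hN (by positivity)
    (by positivity : 0 ≤ q₁ * g) h
  refine le_of_mul_le_mul_right ?_ hg
  linarith

lemma exists_discounted_throughput_le_energy_lt {d₁ d₂ g N σ p : ℝ} (hd₁ : 0 < d₁)
    (hd₂ : 0 < d₂) (hg : 0 < g) (hσ : 0 < σ) (hσN : σ ≤ N) (hNp : N < σ + p * g) :
    ∃ q₁ q₂ : ℝ, 0 ≤ q₁ ∧ 0 ≤ q₂ ∧
      d₂ * logb 2 (1 + p * g / σ) ≤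
        d₁ * logb 2 (1 + q₁ * g / N) + d₂ * logb 2 (1 + q₂ * g / σ) ∧
      d₁ * q₁ + d₂ * q₂ < d₂ * p := by
  have hN : 0 < N := hσ.trans_le hσN
  obtain ⟨x, y, hx, hyN, hxy, hrate⟩ := exists_mul_lt_mul_and_mul_log_sub_le hd₁ hd₂ hN hNp
  refine ⟨x / g, p - y / g, div_nonneg hx hg.le, ?_, ?_, ?_⟩
  · rw [sub_nonneg, div_le_iff₀ hg]
    linarith
  · rw [div_mul_cancel₀ x hg.ne', sub_mul, div_mul_cancel₀ y hg.ne',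
      discounted_logb_le_iff hN hσ (by linarith) (by linarith) (by linarith)]
    convert hrate using 4
    ring
  · have hsaving : 0 < (d₂ * y - d₁ * x) / g := div_pos (sub_pos.mpr hxy) hg
    calc d₁ * (x / g) + d₂ * (p - y / g) = d₂ * p - (d₂ * y - d₁ * x) / g := by ring
      _ < d₂ * p := by linarith

theorem stmt_4_general (gjj gij σ2 pi pj : ℝ) (hgjj : 0 < gjj) (hgij : 0 < gij) (hσ : 0 < σ2)
    (hpi : 0 ≤ pi) (hpj : 0 ≤ pj) (t₁ t₂ : ℕ) :
    (∀ δ : ℝ, 0 < δ → δ < 1 →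
      ∃ q₁ q₂ : ℝ, 0 ≤ q₁ ∧ 0 ≤ q₂ ∧
        δ ^ t₂ * Real.logb 2 (1 + pj * gjj / σ2) ≤
          δ ^ t₁ * Real.logb 2 (1 + q₁ * gjj / (pi * gij + σ2)) +
          δ ^ t₂ * Real.logb 2 (1 + q₂ * gjj / σ2) ∧
        δ ^ t₁ * q₁ + δ ^ t₂ * q₂ < δ ^ t₂ * pj) ↔
    pi * gij < pj * gjj := by
  have hσN : σ2 ≤ pi * gij + σ2 := le_add_of_nonneg_left (mul_nonneg hpi hgij.le)
  constructor
  · intro h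
    by_contra hle
    obtain ⟨q₁, q₂, hq₁, hq₂, hrate, henergy⟩ := h (1 / 2) (by norm_num) (by norm_num)
    have := energy_le_of_discounted_throughput_le (by positivity) (by positivity) hgjj hσ hpj
      hq₁ hq₂ (by linarith) hrate
    linarith
  · intro h δ hδ _
    exact exists_discounted_throughput_le_energy_lt (pow_pos hδ _) (pow_pos hδ _) hgjj hσ hσN
      (by linarith)

theorem stmt_4 (gjj gij σ2 pi pj : ℝ) (hgjj : 0 < gjj) (hgij : 0 < gij) (hσ : 0 < σ2)
    (hpi : 0 ≤ pi) (hpj : 0 ≤ pj) (t₁ t₂ : ℕ) (hts : t₁ ≠ t₂) :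
    (∀ δ : ℝ, 0 < δ → δ < 1 →
      ∃ q₁ q₂ : ℝ, 0 ≤ q₁ ∧ 0 ≤ q₂ ∧
        δ ^ t₂ * Real.logb 2 (1 + pj * gjj / σ2) ≤
          δ ^ t₁ * Real.logb 2 (1 + q₁ * gjj / (pi * gij + σ2)) +
          δ ^ t₂ * Real.logb 2 (1 + q₂ * gjj / σ2) ∧
        δ ^ t₁ * q₁ + δ ^ t₂ * q₂ < δ ^ t₂ * pj) ↔
    pi * gij < pj * gjj :=
  stmt_4_general gjj gij σ2 pi pj hgjj hgij hσ hpi hpj t₁ t₂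
end

section
/- For g > 0, σ² > 0, and 0 < p₁ < p₂, and any weights w₁, w₂ > 0, there exist ε₁ > 0 and ε₂ > 0 with ε₂ determined by ε₂ = ((σ² + g·p₂)/g)·(1 - ((σ² + g·p₁)/(σ² + g·(p₁+ε₁)))^{w₁/w₂}) such that w₁·log₂(1 + g(p₁+ε₁)/σ²) + w₂·log₂(1 + g(p₂-ε₂)/σ²) = w₁·log₂(1 + g·p₁/σ²) + w₂·log₂(1 + g·p₂/σ²) and w₂·ε₂ > w₁·ε₁. -/
open Real

lemma aux_bernoulli {r c : ℝ} (hr0 : 0 < r) (hr1 : r < 1) (hc : 0 < c) :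
    c * (1 - r) * r ^ c ≤ 1 - r ^ c := by
  have hrc0 : (0:ℝ) < r ^ c := Real.rpow_pos_of_pos hr0 c
  rcases le_total 1 c with h1c | hc1
  · -- c ≥ 1 : Bernoulli with 1 + s = 1/r
    have hs : (-1:ℝ) ≤ 1/r - 1 := by
      have : (0:ℝ) ≤ 1/r := by positivity
      linarith
    have hb := one_add_mul_self_le_rpow_one_add hs h1c
    have h1r : (1:ℝ) + (1/r - 1) = 1/r := by ring
    rw [h1r] at hb
    have hinv : (1/r) ^ c = (r ^ c)⁻¹ := by
      rw [one_div, Real.inv_rpow hr0.le]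
    rw [hinv] at hb
    -- hb : 1 + c * (1/r - 1) ≤ (r^c)⁻¹
    have h2 : r ^ c * (1 + c * (1/r - 1)) ≤ 1 := by
      calc r ^ c * (1 + c * (1/r - 1)) ≤ r ^ c * (r ^ c)⁻¹ := by
            exact mul_le_mul_of_nonneg_left hb hrc0.le
        _ = 1 := mul_inv_cancel₀ (ne_of_gt hrc0)
    have h3 : c * (1/r - 1) = c * (1 - r) / r := by field_simp
    have h4 : c * (1 - r) / r ≥ c * (1 - r) := by
      rw [ge_iff_le, div_eq_mul_inv]
      have : (1:ℝ) ≤ r⁻¹ := by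
        rw [le_inv_comm₀ one_pos hr0]; simpa using hr1.le
      nlinarith [mul_pos hc (by linarith : (0:ℝ) < 1 - r)]
    nlinarith
  · -- c ≤ 1
    have hs : (-1:ℝ) ≤ r - 1 := by linarith
    have hb := rpow_one_add_le_one_add_mul_self hs hc.le hc1
    have h1r : (1:ℝ) + (r - 1) = r := by ring
    rw [h1r] at hb
    -- hb : r ^ c ≤ 1 + c * (r - 1)
    have hrc1 : r ^ c ≤ 1 := Real.rpow_le_one hr0.le hr1.le hc.le
    nlinarith [mul_pos hc (by linarith : (0:ℝ) < 1 - r)]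

theorem stmt_6 (g σ2 p₁ p₂ w₁ w₂ : ℝ) (hg : 0 < g) (hσ : 0 < σ2)
    (hp₁ : 0 < p₁) (hp : p₁ < p₂) (hw₁ : 0 < w₁) (hw₂ : 0 < w₂) :
    ∃ ε₁ > (0:ℝ), ∃ ε₂ > (0:ℝ),
      ε₂ = (σ2 + g * p₂) / g *
        (1 - ((σ2 + g * p₁) / (σ2 + g * (p₁ + ε₁))) ^ (w₁ / w₂)) ∧
      w₁ * Real.logb 2 (1 + g * (p₁ + ε₁) / σ2) + w₂ * Real.logb 2 (1 + g * (p₂ - ε₂) / σ2)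
        = w₁ * Real.logb 2 (1 + g * p₁ / σ2) + w₂ * Real.logb 2 (1 + g * p₂ / σ2) ∧
      w₁ * ε₁ < w₂ * ε₂ := by
  set a : ℝ := σ2 + g * p₁ with ha_def
  set b : ℝ := σ2 + g * p₂ with hb_def
  set c : ℝ := w₁ / w₂ with hc_def
  have ha : 0 < a := by positivity
  have hb : 0 < b := by have := mul_lt_mul_of_pos_left hp hg; simp only [hb_def]; linarith
  have hab : a < b := by have := mul_lt_mul_of_pos_left hp hg; simp only [ha_def, hb_def]; linarith
  have hc : 0 < c := div_pos hw₁ hw₂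
  have hab1 : a / b < 1 := (div_lt_one hb).mpr hab
  have hab0 : 0 < a / b := div_pos ha hb
  set r : ℝ := (a / b) ^ ((1:ℝ)/(c+2)) with hr_def
  have hr0 : 0 < r := Real.rpow_pos_of_pos hab0 _
  have hr1 : r < 1 := Real.rpow_lt_one hab0.le hab1 (by positivity)
  -- key : a < b * r ^ (c+1)
  have hkey : a < b * r ^ (c + 1) := by
    have h1 : r ^ (c + 1) = (a / b) ^ ((c+1)/(c+2)) := by
      rw [hr_def, ← Real.rpow_mul hab0.le]
      ring_nf
    have h2 : a / b < (a / b) ^ ((c+1)/(c+2)) := by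
      nth_rewrite 1 [show a / b = (a/b) ^ (1:ℝ) by rw [Real.rpow_one]]
      exact Real.rpow_lt_rpow_of_exponent_gt hab0 hab1
        (by rw [div_lt_one (by positivity)]; linarith)
    rw [h1]
    calc a = b * (a / b) := by field_simp
      _ < b * (a/b) ^ ((c+1)/(c+2)) := by exact mul_lt_mul_of_pos_left h2 hb
  have hrc0 : 0 < r ^ c := Real.rpow_pos_of_pos hr0 c
  have hrc1 : r ^ c < 1 := Real.rpow_lt_one hr0.le hr1 hc
  set ε₁ : ℝ := a * (1 - r) / (g * r) with he1_def
  have he1 : 0 < ε₁ := by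
    apply div_pos
    · exact mul_pos ha (by linarith)
    · positivity
  set ε₂ : ℝ := b / g * (1 - r ^ c) with he2_def
  have he2 : 0 < ε₂ := mul_pos (by positivity) (by linarith)
  have hden : σ2 + g * (p₁ + ε₁) = a / r := by
    rw [he1_def]; field_simp [ha_def]; ring
  have hratio : (σ2 + g * p₁) / (σ2 + g * (p₁ + ε₁)) = r := by
    rw [hden, ← ha_def, div_div_eq_mul_div, mul_div_assoc, mul_comm,
      div_mul_cancel₀ r (ne_of_gt ha)]
  refine ⟨ε₁, he1, ε₂, he2, ?_, ?_, ?_⟩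
  · rw [hratio]
  · -- log identity
    have e1 : 1 + g * (p₁ + ε₁) / σ2 = a / (r * σ2) := by
      have : 1 + g * (p₁ + ε₁) / σ2 = (σ2 + g * (p₁ + ε₁)) / σ2 := by field_simp
      rw [this, hden]; field_simp
    have hge2 : g * ε₂ = b * (1 - r ^ c) := by
      rw [he2_def]; field_simp
    have hnum : σ2 + g * (p₂ - ε₂) = b * r ^ c := by
      linear_combination -hge2 - hb_def
    have e2 : 1 + g * (p₂ - ε₂) / σ2 = b * r ^ c / σ2 := by
      rw [show (1:ℝ) + g * (p₂ - ε₂) / σ2 = (σ2 + g * (p₂ - ε₂)) / σ2 by field_simp, hnum]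
    have e3 : 1 + g * p₁ / σ2 = a / σ2 := by rw [ha_def]; field_simp
    have e4 : 1 + g * p₂ / σ2 = b / σ2 := by rw [hb_def]; field_simp
    rw [e1, e2, e3, e4]
    rw [Real.logb_div (by positivity) (by positivity),
        Real.logb_div (by positivity) (by positivity),
        Real.logb_div (by positivity) (by positivity),
        Real.logb_div (by positivity) (by positivity),
        Real.logb_mul (by positivity) (by positivity),
        Real.logb_mul (by positivity) (by positivity),
        Real.logb_rpow_eq_mul_logb_of_pos hr0]
    have hw : w₂ * c = w₁ := by rw [hc_def]; field_simp
    linear_combination Real.logb 2 r * hw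
  · -- w₁ * ε₁ < w₂ * ε₂
    have hber := aux_bernoulli hr0 hr1 hc
    have h1 : w₂ * ε₂ ≥ w₂ * (b / g * (c * (1 - r) * r ^ c)) := by
      rw [he2_def]
      apply mul_le_mul_of_nonneg_left _ hw₂.le
      exact mul_le_mul_of_nonneg_left hber (by positivity)
    have hw : w₂ * c = w₁ := by rw [hc_def]; field_simp
    have h2 : w₁ * ε₁ < w₂ * (b / g * (c * (1 - r) * r ^ c)) := by
      rw [he1_def]
      rw [show w₂ * (b / g * (c * (1 - r) * r ^ c)) = (w₂ * c) * (b * r ^ c * (1 - r) / g) by ring,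
        hw]
      apply mul_lt_mul_of_pos_left _ hw₁
      rw [div_lt_div_iff₀ (by positivity) hg]
      have h1r : 0 < 1 - r := by linarith
      have hrc1' : r ^ (c + 1) = r ^ c * r := by
        rw [Real.rpow_add hr0, Real.rpow_one]
      rw [hrc1'] at hkey
      nlinarith [mul_pos hg h1r, hkey, hrc0]
    linarith
end

section
/- The derivative of Δ(ε₁) = -w₁·ε₁ + w₂·ε₂(ε₁), where ε₂(ε₁) = ((σ² + g·p₂)/g)·(1 - ((σ² + g·p₁)/(σ² + g·(p₁+ε₁)))^{w₁/w₂}), is Δ'(ε₁) = w₁·[((σ² + g·p₂)/(σ² + g·(p₁+ε₁)))·((σ² + g·p₁)/(σ² + g·(p₁+ε₁)))^{w₁/w₂} - 1], and Δ'(0) > 0 whenever p₂ > p₁ ≥ 0. -/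
open Real

theorem HasDerivAt.const_div_rpow {f : ℝ → ℝ} {f' x : ℝ} (c r : ℝ) (hf : HasDerivAt f f' x)
    (hc : c ≠ 0) (hfx : f x ≠ 0) :
    HasDerivAt (fun y => (c / f y) ^ r) (-(r * f' / f x) * (c / f x) ^ r) x := by
  have hq : c / f x ≠ 0 := div_ne_zero hc hfx
  convert ((hasDerivAt_const x c).fun_div hf hfx).rpow_const (p := r) (Or.inl hq) using 1
  rw [rpow_sub_one hq]
  field_simp
  ring

theorem stmt_7 (g σ2 p₁ p₂ w₁ w₂ : ℝ) (hg : 0 < g) (hσ : 0 < σ2)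
    (hp₁ : 0 ≤ p₁) (hp : p₁ < p₂) (hw₁ : 0 < w₁) (hw₂ : 0 < w₂) :
    (∀ ε₁ : ℝ, 0 ≤ ε₁ →
      HasDerivAt (fun e : ℝ => -(w₁ * e) + w₂ * ((σ2 + g * p₂) / g *
          (1 - ((σ2 + g * p₁) / (σ2 + g * (p₁ + e))) ^ (w₁ / w₂))))
        (w₁ * ((σ2 + g * p₂) / (σ2 + g * (p₁ + ε₁)) *
          ((σ2 + g * p₁) / (σ2 + g * (p₁ + ε₁))) ^ (w₁ / w₂) - 1)) ε₁) ∧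
    0 < w₁ * ((σ2 + g * p₂) / (σ2 + g * (p₁ + 0)) *
          ((σ2 + g * p₁) / (σ2 + g * (p₁ + 0))) ^ (w₁ / w₂) - 1) := by
  have ha : 0 < σ2 + g * p₁ := by positivity
  refine ⟨fun ε₁ hε₁ => ?_, ?_⟩
  · have hD : 0 < σ2 + g * (p₁ + ε₁) := by positivity
    have hD' : HasDerivAt (fun e : ℝ => σ2 + g * (p₁ + e)) g ε₁ := by
      simpa using (((hasDerivAt_id ε₁).const_add p₁).const_mul g).const_add σ2
    have hpow := hD'.const_div_rpow (σ2 + g * p₁) (w₁ / w₂) ha.ne' hD.ne'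
    refine (((hasDerivAt_id' ε₁).const_mul w₁).fun_neg.fun_add
      (((hpow.const_sub 1).const_mul ((σ2 + g * p₂) / g)).const_mul w₂)).congr_deriv ?_
    field_simp
    ring
  · rw [add_zero, div_self ha.ne', one_rpow, mul_one]
    have hb : 1 < (σ2 + g * p₂) / (σ2 + g * p₁) := (one_lt_div ha).2 (by nlinarith)
    exact mul_pos hw₁ (by linarith)
end

section
/- Let N ≥ 1 users have positive TDMA instantaneous throughputs r₁, …, r_N and let R = {γ ∈ ℝ^N : γᵢ ≥ 0 for all i, and ∑ᵢ γᵢ/rᵢ = 1}. If δ ≥ 1 - 1/N, then for every γ ∈ R there exists a user i* and a vector γ' ∈ R such that γ_{i*} = (1-δ)·r_{i*} + δ·γ'_{i*} and γⱼ = δ·γ'ⱼ for all j ≠ i*; that is, R is a self-generating set. -/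
/-!
The ratios `γᵢ / rᵢ` sum to `1`, so some user `i*` (e.g. the maximiser) has
`γ_{i*} / r_{i*} ≥ 1 / N ≥ 1 - δ`, i.e. `γ_{i*} ≥ (1 - δ) r_{i*}`. Removing the
instantaneous payoff `(1 - δ) r_{i*}` from `γ` therefore keeps every coordinate nonnegative
and lowers `∑ γᵢ / rᵢ` by exactly `1 - δ`, and dividing by `δ` restores the sum `1`. When `δ = 0` this forces
`γ_{i*} = r_{i*}` and `γⱼ = 0` for `j ≠ i*`, so any `γ' ∈ R` works.
-/

open Finset

section TDMA

variable {ι : Type*}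

def tdmaRegion [Fintype ι] (r : ι → ℝ) : Set (ι → ℝ) :=
  {γ | (∀ i, 0 ≤ γ i) ∧ ∑ i, γ i / r i = 1}

/-- The paper's `γ'` when user `i` transmits in the current slot. -/
noncomputable def continuation [DecidableEq ι] (δ : ℝ) (r : ι → ℝ) (i : ι) (γ : ι → ℝ) :
    ι → ℝ :=
  δ⁻¹ • (γ - Pi.single i ((1 - δ) * r i))

theorem exists_inv_card_le_div [Fintype ι] [Nonempty ι] {r γ : ι → ℝ}
    (hsum : ∑ i, γ i / r i = 1) : ∃ i, 1 / (Fintype.card ι : ℝ) ≤ γ i / r i := by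
  obtain ⟨i, -, hi⟩ := exists_le_of_sum_le univ_nonempty (f := fun _ ↦ 1 / (Fintype.card ι : ℝ))
    (g := fun i ↦ γ i / r i) (by simp [hsum])
  exact ⟨i, hi⟩

theorem eq_of_mem_tdmaRegion_of_le [Fintype ι] {r γ : ι → ℝ} (hr : ∀ i, 0 < r i)
    (hγ : γ ∈ tdmaRegion r) {i : ι} (hi : r i ≤ γ i) : γ i = r i ∧ ∀ j ≠ i, γ j = 0 := by
  classical
  obtain ⟨hγ0, hsum⟩ := hγ
  have hterm_nonneg : ∀ j, 0 ≤ γ j / r j := fun j ↦ div_nonneg (hγ0 j) (hr j).le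
  have hone_le : 1 ≤ γ i / r i := (one_le_div (hr i)).2 hi
  have hsplit : γ i / r i + ∑ j ∈ univ.erase i, γ j / r j = 1 := by
    rw [add_sum_erase _ (fun j ↦ γ j / r j) (mem_univ i), hsum]
  have hrest_nonneg : 0 ≤ ∑ j ∈ univ.erase i, γ j / r j :=
    sum_nonneg fun j _ ↦ hterm_nonneg j
  have hrest : ∑ j ∈ univ.erase i, γ j / r j = 0 := by linarith
  refine ⟨?_, fun j hj ↦ ?_⟩
  · have : γ i / r i = 1 := by linarith
    exact (div_eq_one_iff_eq (hr i).ne').1 this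
  · have := (sum_eq_zero_iff_of_nonneg fun j _ ↦ hterm_nonneg j).1 hrest j (by simp [hj])
    simpa [(hr j).ne'] using this

section Continuation

variable [DecidableEq ι] {δ : ℝ} {r γ : ι → ℝ} {i : ι}

theorem continuation_apply_self (hδ : δ ≠ 0) :
    γ i = (1 - δ) * r i + δ * continuation δ r i γ i := by
  simp [continuation, hδ]

theorem continuation_apply_of_ne (hδ : δ ≠ 0) {j : ι} (hj : j ≠ i) :
    γ j = δ * continuation δ r i γ j := by
  simp [continuation, hj, hδ]

theorem sum_continuation_div [Fintype ι] (hri : r i ≠ 0) :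
    ∑ j, continuation δ r i γ j / r j = δ⁻¹ * (∑ j, γ j / r j - (1 - δ)) := by
  simp [continuation, mul_div_assoc, ← mul_sum, sub_div, sum_sub_distrib, Pi.single_apply, ite_div,
    hri]

theorem continuation_mem_tdmaRegion [Fintype ι] (hr : ∀ j, 0 < r j) (hδ : 0 < δ)
    (hγ : γ ∈ tdmaRegion r) (hi : (1 - δ) * r i ≤ γ i) : continuation δ r i γ ∈ tdmaRegion r := by
  refine ⟨fun j ↦ ?_, ?_⟩
  · refine mul_nonneg (inv_nonneg.2 hδ.le) (sub_nonneg.2 ?_)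
    by_cases hj : j = i
    · subst hj; simpa using hi
    · simpa [hj] using hγ.1 j
  · rw [sum_continuation_div (hr i).ne', hγ.2]
    field_simp
    ring

end Continuation

end TDMA

theorem stmt_11 (N : ℕ) (hN : 1 ≤ N) (r : Fin N → ℝ) (hr : ∀ i, 0 < r i)
    (δ : ℝ) (hδ : 1 - 1 / (N : ℝ) ≤ δ) :
    ∀ γ : Fin N → ℝ, (∀ i, 0 ≤ γ i) → (∑ i, γ i / r i = 1) →
      ∃ istar : Fin N, ∃ γ' : Fin N → ℝ,
        (∀ i, 0 ≤ γ' i) ∧ (∑ i, γ' i / r i = 1) ∧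
        γ istar = (1 - δ) * r istar + δ * γ' istar ∧
        ∀ j, j ≠ istar → γ j = δ * γ' j := by
  intro γ hγ0 hsum
  have : NeZero N := ⟨by omega⟩
  have hinv_le_one : 1 / (N : ℝ) ≤ 1 := div_le_one_of_le₀ (by exact_mod_cast hN) (by positivity)
  obtain ⟨i, hi⟩ := exists_inv_card_le_div hsum
  rw [Fintype.card_fin] at hi
  have hpayoff : (1 - δ) * r i ≤ γ i := (le_div_iff₀ (hr i)).1 (by linarith)
  rcases (show 0 ≤ δ by linarith).eq_or_lt with rfl | hδ
  · obtain ⟨hii, hj⟩ := eq_of_mem_tdmaRegion_of_le hr ⟨hγ0, hsum⟩ (by simpa using hpayoff)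
    exact ⟨i, γ, hγ0, hsum, by simp [hii], fun j hji ↦ by simp [hj j hji]⟩
  · obtain ⟨hγ'0, hγ'sum⟩ := continuation_mem_tdmaRegion hr hδ ⟨hγ0, hsum⟩ hpayoff
    exact ⟨i, continuation δ r i γ, hγ'0, hγ'sum, continuation_apply_self hδ.ne',
      fun j hji ↦ continuation_apply_of_ne hδ.ne' hji⟩
end

section
/- Let E: ℝ^N_{>0} → ℝ be convex and nondecreasing in each argument, and let each argument be hᵢ(xᵢ) = cᵢ·(2^{1/xᵢ} - 1)·xᵢ with cᵢ > 0. Then the composite function (x₁, …, x_N) ↦ E(h₁(x₁), …, h_N(x_N)) is convex on (0, ∞)^N, and hence the optimization problem minimizing it subject to the linear constraints ∑ᵢ Rᵢ^min·xᵢ = 1 and xᵢ ≥ 1/r̄ᵢ is a convex optimization problem. -/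
/-!
Each `hᵢ(x) = cᵢ (2^{1/x} - 1) x = cᵢ (x·exp(log 2 / x) - x)` is convex on `(0, ∞)`, being a
perspective of `exp` minus a linear function, and it is positive there, so it maps the open
orthant into the domain of `E`. A convex function which is nondecreasing for the componentwise
order, composed with a componentwise convex map, is convex. The feasible set is an affine hyperplane intersected with a box, hence convex.
-/

open Set Real

theorem ConvexOn.comp_of_monotoneOn {𝕜 E F β : Type*} [Semiring 𝕜] [PartialOrder 𝕜]
    [AddCommMonoid E] [SMul 𝕜 E] [AddCommMonoid F] [PartialOrder F] [SMul 𝕜 F]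
    [AddCommMonoid β] [PartialOrder β] [SMul 𝕜 β]
    {s : Set E} {t : Set F} {f : E → F} {g : F → β}
    (hg : ConvexOn 𝕜 t g) (hg' : MonotoneOn g t) (hf : ConvexOn 𝕜 s f) (hst : MapsTo f s t) :
    ConvexOn 𝕜 s (g ∘ f) :=
  ⟨hf.1, fun _ hx _ hy _ _ ha hb hab =>
    (hg' (hst (hf.1 hx hy ha hb hab)) (hg.1 (hst hx) (hst hy) ha hb hab)
      (hf.2 hx hy ha hb hab)).trans (hg.2 (hst hx) (hst hy) ha hb hab)⟩

theorem convexOn_univ_pi {𝕜 ι E β : Type*} [Semiring 𝕜] [PartialOrder 𝕜]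
    [AddCommMonoid E] [SMul 𝕜 E] [AddCommMonoid β] [PartialOrder β] [SMul 𝕜 β]
    {t : ι → Set E} {f : ι → E → β} (hf : ∀ i, ConvexOn 𝕜 (t i) (f i)) :
    ConvexOn 𝕜 (univ.pi t) (fun x i => f i (x i)) :=
  ⟨convex_pi fun i _ => (hf i).1, fun _ hx _ hy _ _ ha hb hab i =>
    (hf i).2 (hx i trivial) (hy i trivial) ha hb hab⟩

theorem ConvexOn.mul_comp_div {f : ℝ → ℝ} (hf : ConvexOn ℝ univ f) (a : ℝ) :
    ConvexOn ℝ (Ioi 0) fun x => x * f (a / x) := by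
  refine ⟨convex_Ioi 0, fun x (hx : 0 < x) y (hy : 0 < y) p q hp hq hpq => ?_⟩
  simp only [smul_eq_mul]
  set z := p * x + q * y with hz
  have hz0 : 0 < z := convex_Ioi (0 : ℝ) hx hy hp hq hpq
  -- `a / z` is the convex combination of `a / x` and `a / y` with weights `p x / z`, `q y / z`.
  have key := hf.2 (mem_univ (a / x)) (mem_univ (a / y))
    (div_nonneg (mul_nonneg hp hx.le) hz0.le) (div_nonneg (mul_nonneg hq hy.le) hz0.le)
    (by field_simp; exact hz.symm)
  have harg : p * x / z * (a / x) + q * y / z * (a / y) = a / z := by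
    field_simp
    linear_combination a * hpq
  rw [smul_eq_mul, smul_eq_mul, smul_eq_mul, harg] at key
  calc z * f (a / z) ≤ z * (p * x / z * f (a / x) + q * y / z * f (a / y)) :=
        mul_le_mul_of_nonneg_left key hz0.le
    _ = p * (x * f (a / x)) + q * (y * f (a / y)) := by field_simp

theorem convexOn_rpow_one_div_sub_one_mul {b : ℝ} (hb : 0 < b) :
    ConvexOn ℝ (Ioi 0) fun x => (b ^ (1 / x) - 1) * x := by
  have hexp : (fun x : ℝ => (b ^ (1 / x) - 1) * x) = fun x => x * exp (log b / x) - x := by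
    funext x
    rw [rpow_def_of_pos hb, mul_one_div]
    ring
  rw [hexp]
  exact (convexOn_exp.mul_comp_div (log b)).sub (concaveOn_id (convex_Ioi 0))

theorem rpow_one_div_sub_one_mul_pos {b x : ℝ} (hb : 1 < b) (hx : 0 < x) :
    0 < (b ^ (1 / x) - 1) * x :=
  mul_pos (sub_pos.2 (one_lt_rpow hb (by positivity))) hx

theorem convex_setOf_sum_mul_eq_and_forall_le {ι : Type*} [Fintype ι] (a l : ι → ℝ) (b : ℝ) :
    Convex ℝ {x : ι → ℝ | (∑ i, a i * x i = b) ∧ ∀ i, l i ≤ x i} := by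
  have hlin : IsLinearMap ℝ fun x : ι → ℝ => ∑ i, a i * x i :=
    ⟨fun x y => by simp [mul_add, Finset.sum_add_distrib],
     fun r x => by simp [Finset.mul_sum, mul_left_comm]⟩
  have hset : {x : ι → ℝ | (∑ i, a i * x i = b) ∧ ∀ i, l i ≤ x i}
      = {x | ∑ i, a i * x i = b} ∩ univ.pi fun i => Ici (l i) := by
    ext
    simp only [mem_ofPred_eq, mem_inter_iff, mem_pi, mem_univ, mem_Ici, forall_const]
  rw [hset]
  exact (convex_hyperplane hlin b).inter (convex_pi fun i _ => convex_Ici (l i))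

theorem stmt_17_general (N : ℕ) (E : (Fin N → ℝ) → ℝ) (c Rmin rbar : Fin N → ℝ)
    (hc : ∀ i, 0 < c i)
    (hEconv : ConvexOn ℝ {P : Fin N → ℝ | ∀ i, 0 < P i} E)
    (hEmono : ∀ P Q : Fin N → ℝ, (∀ i, 0 < P i) → (∀ i, 0 < Q i) →
      (∀ i, P i ≤ Q i) → E P ≤ E Q) :
    ConvexOn ℝ {x : Fin N → ℝ | ∀ i, 0 < x i}
      (fun x => E (fun i => c i * ((2:ℝ) ^ (1 / x i) - 1) * x i)) ∧
    Convex ℝ {x : Fin N → ℝ | (∑ i, Rmin i * x i = 1) ∧ ∀ i, 1 / rbar i ≤ x i} := by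
  set h : Fin N → ℝ → ℝ := fun i y => c i * ((2:ℝ) ^ (1 / y) - 1) * y with hh
  have hconv : ConvexOn ℝ (univ.pi fun _ => Ioi 0) fun (x : Fin N → ℝ) i => h i (x i) :=
    convexOn_univ_pi fun i => by
      simpa only [hh, smul_eq_mul, mul_assoc] using
        (convexOn_rpow_one_div_sub_one_mul two_pos).smul (hc i).le
  have hmaps : MapsTo (fun (x : Fin N → ℝ) i => h i (x i))
      (univ.pi fun _ => Ioi 0) {P | ∀ i, 0 < P i} := fun x hx i => by
    simpa only [hh, mul_assoc] using
      mul_pos (hc i) (rpow_one_div_sub_one_mul_pos one_lt_two (hx i trivial))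
  have horthant : {x : Fin N → ℝ | ∀ i, 0 < x i} = univ.pi fun _ => Ioi 0 := by ext; simp
  refine ⟨?_, convex_setOf_sum_mul_eq_and_forall_le Rmin (fun i => 1 / rbar i) 1⟩
  rw [horthant]
  exact hEconv.comp_of_monotoneOn (fun P hP Q hQ => hEmono P Q hP hQ) hconv hmaps

theorem stmt_17 (N : ℕ) (E : (Fin N → ℝ) → ℝ) (c Rmin rbar : Fin N → ℝ)
    (hc : ∀ i, 0 < c i) (hRmin : ∀ i, 0 < Rmin i) (hrbar : ∀ i, 0 < rbar i)
    (hEconv : ConvexOn ℝ {P : Fin N → ℝ | ∀ i, 0 < P i} E)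
    (hEmono : ∀ P Q : Fin N → ℝ, (∀ i, 0 < P i) → (∀ i, 0 < Q i) →
      (∀ i, P i ≤ Q i) → E P ≤ E Q) :
    ConvexOn ℝ {x : Fin N → ℝ | ∀ i, 0 < x i}
      (fun x => E (fun i => c i * ((2:ℝ) ^ (1 / x i) - 1) * x i)) ∧
    Convex ℝ {x : Fin N → ℝ | (∑ i, Rmin i * x i = 1) ∧ ∀ i, 1 / rbar i ≤ x i} :=
  stmt_17_general N E c Rmin rbar hc hEconv hEmono
end
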